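/- arXiv:1907.09099 — 2 statements merged into one kernel-verified Lean document; each statement's English description precedes it below -/
import Mathlib

section
/- Let K be a consistent and deductively closed set of propositional formulas, let {Φ_C, Φ_A, Φ_R} be a credibility partition of the set Φ of all formulas, let B*_K : Φ → 2^Φ be a basic AGM belief revision function, and define B°_K : Φ → 2^Φ by B°_K(φ) = K if φ ∈ Φ_R, B°_K(φ) = B*_K(φ) if φ ∈ Φ_C, and B°_K(φ) = K ∩ B*_K(φ) if φ ∈ Φ_A. Then B°_K is a filtered belief revision function based on K. -/
/-! Propositional language built from a set of atomic formulas via negation and disjunction. -/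

inductive PropForm (α : Type) : Type
  | atom : α → PropForm α
  | neg : PropForm α → PropForm α
  | or : PropForm α → PropForm α → PropForm α

namespace PropForm

/-- Truth value of a formula under a boolean valuation of the atoms. -/
def eval (v : α → Bool) : PropForm α → Bool
  | atom a => v a
  | neg φ => !(eval v φ)
  | or φ ψ => (eval v φ) || (eval v ψ)

/-- Conjunction, defined from negation and disjunction. -/
def and (φ ψ : PropForm α) : PropForm α := neg (or (neg φ) (neg ψ))

/-- Material implication. -/
def imp (φ ψ : PropForm α) : PropForm α := or (neg φ) ψ

/-- Biconditional. -/
def biimp (φ ψ : PropForm α) : PropForm α := and (imp φ ψ) (imp ψ φ)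

/-- A formula is a tautology if it is true under every boolean valuation. -/
def Tautology (φ : PropForm α) : Prop := ∀ v : α → Bool, eval v φ = true

/-- A formula is a contradiction if it is false under every boolean valuation. -/
def Contradiction (φ : PropForm α) : Prop := ∀ v : α → Bool, eval v φ = false

end PropForm

open PropForm

/-- The PL-deductive closure of `F`: ψ ∈ [F]^PL iff there are φ₁,…,φₙ ∈ F (n ≥ 0) such that
(φ₁ ∧ … ∧ φₙ) → ψ is a tautology (stated via the equivalent curried implication
φ₁ → (φ₂ → ⋯ → ψ)). -/
def Cn (F : Set (PropForm α)) : Set (PropForm α) :=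
  {ψ | ∃ l : List (PropForm α), (∀ φ ∈ l, φ ∈ F) ∧ Tautology (l.foldr PropForm.imp ψ)}

/-- A set of formulas is consistent if its deductive closure is not the set of all formulas. -/
def ConsistentSet (F : Set (PropForm α)) : Prop := Cn F ≠ Set.univ

/-- A set of formulas is deductively closed if it equals its own deductive closure. -/
def DedClosed (F : Set (PropForm α)) : Prop := F = Cn F

/-- A credibility partition of the set of formulas into credible (ΦC), allowable (ΦA) and
rejected (ΦR) formulas. -/
structure CredPartition (ΦC ΦA ΦR : Set (PropForm α)) : Prop where
  disjCA : Disjoint ΦC ΦA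
  disjCR : Disjoint ΦC ΦR
  disjAR : Disjoint ΦA ΦR
  cover : ΦC ∪ ΦA ∪ ΦR = Set.univ
  taut_mem_C : ∀ φ : PropForm α, Tautology φ → φ ∈ ΦC
  C_consistent : ∀ φ ∈ ΦC, ¬ Contradiction φ
  C_equiv_closed : ∀ φ ψ : PropForm α, Tautology (φ.biimp ψ) → φ ∈ ΦC → ψ ∈ ΦC
  A_consistent : ∀ φ ∈ ΦA, ¬ Contradiction φ
  A_equiv_closed : ∀ φ ψ : PropForm α, Tautology (φ.biimp ψ) → φ ∈ ΦA → ψ ∈ ΦA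
  contra_mem_R : ∀ φ : PropForm α, Contradiction φ → φ ∈ ΦR

/-- Basic AGM belief revision function based on K: postulates AGM1–AGM6. -/
structure IsBasicAGM (K : Set (PropForm α)) (B : PropForm α → Set (PropForm α)) : Prop where
  agm1 : ∀ φ : PropForm α, B φ = Cn (B φ)
  agm2 : ∀ φ : PropForm α, φ ∈ B φ
  agm3 : ∀ φ : PropForm α, B φ ⊆ Cn (K ∪ {φ})
  agm4 : ∀ φ : PropForm α, φ.neg ∉ K → Cn (K ∪ {φ}) ⊆ B φ
  agm5 : ∀ φ : PropForm α, B φ = Set.univ ↔ Contradiction φ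
  agm6 : ∀ φ ψ : PropForm α, Tautology (φ.biimp ψ) → B φ = B ψ

/-- Filtered belief revision function based on K, relative to a credibility partition. -/
structure IsFiltered (ΦC ΦA ΦR K : Set (PropForm α))
    (B : PropForm α → Set (PropForm α)) : Prop where
  f1 : ∀ φ ∈ ΦR, B φ = K
  f2a : ∀ φ : PropForm α, φ.neg ∉ K → φ ∈ ΦC → B φ = Cn (K ∪ {φ})
  f2b : ∀ φ : PropForm α, φ.neg ∉ K → φ ∈ ΦA → B φ = K
  f3 : ∀ φ : PropForm α, φ.neg ∈ K → ConsistentSet (B φ) ∧ DedClosed (B φ)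
  f3a : ∀ φ : PropForm α, φ.neg ∈ K → φ ∈ ΦC → φ ∈ B φ
  f3b : ∀ φ : PropForm α, φ.neg ∈ K → φ ∈ ΦA →
    B φ ⊆ K \ {φ.neg} ∧ Cn (B φ ∪ {φ.neg}) = K
  f4 : ∀ φ ψ : PropForm α, Tautology (φ.biimp ψ) → B φ = B ψ

/-!
Outside `ΦA` the filtered function is `K` or `B*_K` itself, so the postulates are inherited from
AGM. For an allowable `φ` with `¬φ ∈ K`, `K ∩ B*_K(φ)` is an intersection of theories, hence a
theory; it omits `¬φ` because `B*_K(φ)` is consistent and contains `φ`; and adding `¬φ` back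
recovers all of `K`, because each `ψ ∈ K` follows from `¬φ` and `¬φ → ψ`, a formula implied both
by `ψ ∈ K` and by `φ ∈ B*_K(φ)`.
-/

namespace PropForm

variable {α : Type}

@[simp] lemma eval_imp (v : α → Bool) (φ ψ : PropForm α) :
    eval v (imp φ ψ) = (!eval v φ || eval v ψ) := rfl

lemma eval_eq_of_tautology_biimp {φ ψ : PropForm α} (h : Tautology (φ.biimp ψ))
    (v : α → Bool) : eval v φ = eval v ψ := by
  have := h v
  simp only [biimp, PropForm.and, eval, eval_imp] at this
  cases h₁ : eval v φ <;> cases h₂ : eval v ψ <;> simp_all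

lemma Tautology.biimp_symm {φ ψ : PropForm α} (h : Tautology (φ.biimp ψ)) :
    Tautology (ψ.biimp φ) := by
  intro v
  simp [biimp, PropForm.and, eval, eval_eq_of_tautology_biimp h v]

end PropForm

section Closure

variable {α : Type} {F G K : Set (PropForm α)} {φ χ ψ : PropForm α}

lemma subset_Cn (F : Set (PropForm α)) : F ⊆ Cn F :=
  fun φ hφ => ⟨[φ], by simpa using hφ, fun v => by simp⟩

lemma Cn_mono (h : F ⊆ G) : Cn F ⊆ Cn G :=
  fun _ ⟨l, hl, ht⟩ => ⟨l, fun φ hφ => h (hl φ hφ), ht⟩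

lemma mem_Cn_of_tautology_imp (hχ : χ ∈ F) (ht : Tautology (imp χ ψ)) : ψ ∈ Cn F :=
  ⟨[χ], by simpa using hχ, ht⟩

lemma mem_Cn_of_tautology_imp₂ (hχ : χ ∈ F) (hφ : φ ∈ F) (ht : Tautology (imp χ (imp φ ψ))) :
    ψ ∈ Cn F :=
  ⟨[χ, φ], by simp [hχ, hφ], ht⟩

lemma Cn_eq_univ_of_mem_of_neg_mem (hφ : φ ∈ F) (hneg : φ.neg ∈ F) : Cn F = Set.univ :=
  Set.eq_univ_of_forall fun ψ =>
    mem_Cn_of_tautology_imp₂ hφ hneg fun v => by cases h : eval v φ <;> simp [eval, h]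

lemma ConsistentSet.mono (hG : ConsistentSet G) (h : F ⊆ G) : ConsistentSet F :=
  fun hF => hG (Set.eq_univ_of_univ_subset (hF.symm.subset.trans (Cn_mono h)))

lemma DedClosed.Cn_subset (hF : DedClosed F) (h : G ⊆ F) : Cn G ⊆ F :=
  (Cn_mono h).trans hF.symm.subset

lemma DedClosed.mem_of_tautology_imp (hF : DedClosed F) (hχ : χ ∈ F)
    (ht : Tautology (imp χ ψ)) : ψ ∈ F :=
  hF.Cn_subset subset_rfl (mem_Cn_of_tautology_imp hχ ht)

lemma DedClosed.inter (hF : DedClosed F) (hG : DedClosed G) : DedClosed (F ∩ G) :=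
  (subset_Cn _).antisymm <| Set.subset_inter (hF.Cn_subset Set.inter_subset_left)
    (hG.Cn_subset Set.inter_subset_right)

lemma ConsistentSet.neg_notMem (hcons : ConsistentSet F) (hφ : φ ∈ F) : φ.neg ∉ F :=
  fun hneg => hcons (Cn_eq_univ_of_mem_of_neg_mem hφ hneg)

lemma Cn_inter_union_neg_eq (hK : DedClosed K) (hG : DedClosed G) (hnegK : φ.neg ∈ K)
    (hφG : φ ∈ G) : Cn (K ∩ G ∪ {φ.neg}) = K := by
  refine (hK.Cn_subset (Set.union_subset Set.inter_subset_left
    (Set.singleton_subset_iff.2 hnegK))).antisymm fun ψ hψ => ?_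
  have hK' : imp φ.neg ψ ∈ K :=
    hK.mem_of_tautology_imp hψ fun v => by
      cases h₁ : eval v φ <;> cases h₂ : eval v ψ <;> simp [eval, h₁, h₂]
  have hG' : imp φ.neg ψ ∈ G :=
    hG.mem_of_tautology_imp hφG fun v => by
      cases h₁ : eval v φ <;> cases h₂ : eval v ψ <;> simp [eval, h₁, h₂]
  exact mem_Cn_of_tautology_imp₂ (Or.inl ⟨hK', hG'⟩) (Or.inr rfl)
    fun v => by
      cases h₁ : eval v φ <;> cases h₂ : eval v ψ <;> simp [eval, h₁, h₂]

end Closure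

namespace CredPartition

variable {α : Type} {ΦC ΦA ΦR : Set (PropForm α)}

lemma mem_or_mem_or_mem (h : CredPartition ΦC ΦA ΦR) (φ : PropForm α) :
    φ ∈ ΦC ∨ φ ∈ ΦA ∨ φ ∈ ΦR := by
  simpa [or_assoc] using h.cover.symm.subset (Set.mem_univ φ)

lemma R_equiv_closed (h : CredPartition ΦC ΦA ΦR) {φ ψ : PropForm α}
    (hb : Tautology (φ.biimp ψ)) (hφ : φ ∈ ΦR) : ψ ∈ ΦR := by
  rcases h.mem_or_mem_or_mem ψ with hC | hA | hR
  · exact absurd hφ (Set.disjoint_left.1 h.disjCR (h.C_equiv_closed ψ φ hb.biimp_symm hC))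
  · exact absurd hφ (Set.disjoint_left.1 h.disjAR (h.A_equiv_closed ψ φ hb.biimp_symm hA))
  · exact hR

end CredPartition

namespace IsBasicAGM

variable {α : Type} {K : Set (PropForm α)} {B : PropForm α → Set (PropForm α)} {φ : PropForm α}

lemma consistentSet (h : IsBasicAGM K B) (hφ : ¬ Contradiction φ) : ConsistentSet (B φ) := by
  rw [ConsistentSet, ← h.agm1 φ]
  exact mt (h.agm5 φ).1 hφ

lemma eq_Cn_union (h : IsBasicAGM K B) (hφ : φ.neg ∉ K) : B φ = Cn (K ∪ {φ}) :=
  (h.agm3 φ).antisymm (h.agm4 φ hφ)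

lemma subset_of_neg_notMem (h : IsBasicAGM K B) (hφ : φ.neg ∉ K) : K ⊆ B φ :=
  (Set.subset_union_left.trans (subset_Cn _)).trans (h.agm4 φ hφ)

end IsBasicAGM

theorem basicAGM_representation_to_filtered_general {α : Type}
    (ΦC ΦA ΦR K : Set (PropForm α)) (hpart : CredPartition ΦC ΦA ΦR)
    (hKcons : ConsistentSet K) (hKded : DedClosed K)
    (Bs : PropForm α → Set (PropForm α)) (hAGM : IsBasicAGM K Bs)
    (Bo : PropForm α → Set (PropForm α))
    (hBo : ∀ φ : PropForm α,
      (φ ∈ ΦR → Bo φ = K) ∧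
      (φ ∈ ΦC → Bo φ = Bs φ) ∧
      (φ ∈ ΦA → Bo φ = K ∩ Bs φ)) :
    IsFiltered ΦC ΦA ΦR K Bo := by
  refine ⟨fun φ hR => (hBo φ).1 hR, fun φ hn hC => ?_, fun φ hn hA => ?_, fun φ _ => ?_,
    fun φ _ hC => ?_, fun φ hn hA => ?_, fun φ ψ hb => ?_⟩
  · rw [(hBo φ).2.1 hC, hAGM.eq_Cn_union hn]
  · rw [(hBo φ).2.2 hA, Set.inter_eq_left.2 (hAGM.subset_of_neg_notMem hn)]
  · rcases hpart.mem_or_mem_or_mem φ with hC | hA | hR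
    · rw [(hBo φ).2.1 hC]
      exact ⟨hAGM.consistentSet (hpart.C_consistent φ hC), hAGM.agm1 φ⟩
    · rw [(hBo φ).2.2 hA]
      exact ⟨(hAGM.consistentSet (hpart.A_consistent φ hA)).mono Set.inter_subset_right,
        hKded.inter (hAGM.agm1 φ)⟩
    · rw [(hBo φ).1 hR]
      exact ⟨hKcons, hKded⟩
  · rw [(hBo φ).2.1 hC]
    exact hAGM.agm2 φ
  · rw [(hBo φ).2.2 hA]
    have hneg : φ.neg ∉ Bs φ :=
      (hAGM.consistentSet (hpart.A_consistent φ hA)).neg_notMem (hAGM.agm2 φ)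
    exact ⟨fun ψ hψ => ⟨hψ.1, fun h => hneg (h ▸ hψ.2)⟩,
      Cn_inter_union_neg_eq hKded (hAGM.agm1 φ) hn (hAGM.agm2 φ)⟩
  · rcases hpart.mem_or_mem_or_mem φ with hC | hA | hR
    · rw [(hBo φ).2.1 hC, (hBo ψ).2.1 (hpart.C_equiv_closed φ ψ hb hC), hAGM.agm6 φ ψ hb]
    · rw [(hBo φ).2.2 hA, (hBo ψ).2.2 (hpart.A_equiv_closed φ ψ hb hA), hAGM.agm6 φ ψ hb]
    · rw [(hBo φ).1 hR, (hBo ψ).1 (hpart.R_equiv_closed hb hR)]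

/-- Proposition 1, (B) ⇒ (A): the function obtained from a basic AGM belief
revision function by filtering through the credibility partition is a filtered belief
revision function. -/
theorem basicAGM_representation_to_filtered {α : Type} [Countable α] [Nonempty α]
    (ΦC ΦA ΦR K : Set (PropForm α)) (hpart : CredPartition ΦC ΦA ΦR)
    (hKcons : ConsistentSet K) (hKded : DedClosed K)
    (Bs : PropForm α → Set (PropForm α)) (hAGM : IsBasicAGM K Bs)
    (Bo : PropForm α → Set (PropForm α))
    (hBo : ∀ φ : PropForm α,
      (φ ∈ ΦR → Bo φ = K) ∧
      (φ ∈ ΦC → Bo φ = Bs φ) ∧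
      (φ ∈ ΦA → Bo φ = K ∩ Bs φ)) :
    IsFiltered ΦC ΦA ΦR K Bo :=
  basicAGM_representation_to_filtered_general ΦC ΦA ΦR K hpart hKcons hKded Bs hAGM Bo hBo
end

section
/- Let ⟨Ω, {E_C, E_A, E_R}, f⟩ be a generalized choice structure, V : A → 2^Ω a valuation, K = {φ ∈ Φ : f(Ω) ⊆ ||φ||}, Ψ = {φ ∈ Φ : ||φ|| ∈ E}, and B_{K,Ψ}(φ) = {ψ ∈ Φ : f(||φ||) ⊆ ||ψ||} for φ ∈ Ψ. Then for every φ ∈ Ψ: (i) if f(||φ||) = ||φ|| ∩ f(Ω) and this set is nonempty, then B_{K,Ψ}(φ) = [K ∪ {φ}]^PL; and (ii) if f(||φ||) = f(Ω), then B_{K,Ψ}(φ) = K. -/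
open PropForm

/-! Generalized choice structures and their models. -/

/-- A generalized choice structure ⟨Ω, {EC, EA, ER}, f⟩. The function `f` is total on `Set Ω`
but is only constrained on the events in `EC ∪ EA ∪ ER`. -/
structure GCS (Ω : Type) : Type where
  EC : Set (Set Ω)
  EA : Set (Set Ω)
  ER : Set (Set Ω)
  f : Set Ω → Set Ω
  omega_nonempty : Nonempty Ω
  disjCA : Disjoint EC EA
  disjCR : Disjoint EC ER
  disjAR : Disjoint EA ER
  univ_mem_C : (Set.univ : Set Ω) ∈ EC
  empty_mem_R : (∅ : Set Ω) ∈ ER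
  f_univ_nonempty : (f Set.univ).Nonempty
  f_R : ∀ E ∈ ER, f E = f Set.univ
  f_C : ∀ E ∈ EC, (f E).Nonempty ∧ f E ⊆ E
  f_A : ∀ E ∈ EA, (f E ∩ E).Nonempty

/-- The collection of all events (possible items of information) of a GCS. -/
def GCS.events {Ω : Type} (C : GCS Ω) : Set (Set Ω) := C.EC ∪ C.EA ∪ C.ER

/-- The truth set ||φ|| ⊆ Ω of a formula, given a valuation V : A → 2^Ω. -/
def truthSet {Ω α : Type} (V : α → Set Ω) : PropForm α → Set Ω
  | .atom p => V p
  | .neg φ => (truthSet V φ)ᶜ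
  | .or φ ψ => truthSet V φ ∪ truthSet V ψ

/-- A model (interpretation) of a GCS: a credibility partition together with a valuation
such that events in EC (resp. EA, ER) are truth sets only of credible (resp. allowable,
rejected) formulas. -/
structure IsGCSModel {Ω α : Type} (C : GCS Ω) (ΦC ΦA ΦR : Set (PropForm α))
    (V : α → Set Ω) : Prop where
  credPartition : CredPartition ΦC ΦA ΦR
  memC : ∀ φ : PropForm α, truthSet V φ ∈ C.EC → φ ∈ ΦC
  memA : ∀ φ : PropForm α, truthSet V φ ∈ C.EA → φ ∈ ΦA
  memR : ∀ φ : PropForm α, truthSet V φ ∈ C.ER → φ ∈ ΦR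

/-- The initial belief set K = {φ : f(Ω) ⊆ ||φ||} determined by a GCS and a valuation. -/
def gcsK {Ω α : Type} (C : GCS Ω) (V : α → Set Ω) : Set (PropForm α) :=
  {φ | C.f Set.univ ⊆ truthSet V φ}

/-- The set Ψ = {φ : ||φ|| ∈ E} of formulas that are potential items of information. -/
def gcsPsi {Ω α : Type} (C : GCS Ω) (V : α → Set Ω) : Set (PropForm α) :=
  {φ | truthSet V φ ∈ C.events}

/-- The partial belief revision function B_{K,Ψ}(φ) = {ψ : f(||φ||) ⊆ ||ψ||} (to be used
only on formulas in Ψ). -/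
def gcsB {Ω α : Type} (C : GCS Ω) (V : α → Set Ω) (φ : PropForm α) : Set (PropForm α) :=
  {ψ | C.f (truthSet V φ) ⊆ truthSet V ψ}

/-- Basic-AGM consistency of a GCS (relative to the propositional language over atoms α):
for every model there is a full-domain extension Bo of the partial belief revision function
and a basic AGM belief revision function Bs based on K such that Bo is obtained from Bs by
filtering through the credibility partition. -/
def BasicAGMConsistent (α : Type) {Ω : Type} (C : GCS Ω) : Prop :=
  ∀ (ΦC ΦA ΦR : Set (PropForm α)) (V : α → Set Ω),
    IsGCSModel C ΦC ΦA ΦR V →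
      ∃ Bo Bs : PropForm α → Set (PropForm α),
        (∀ φ ∈ gcsPsi C V, Bo φ = gcsB C V φ) ∧
        IsBasicAGM (gcsK C V) Bs ∧
        ∀ φ : PropForm α,
          (φ ∈ ΦR → Bo φ = gcsK C V) ∧
          (φ ∈ ΦC → Bo φ = Bs φ) ∧
          (φ ∈ ΦA → Bo φ = gcsK C V ∩ Bs φ)

/-- Condition (B) of Proposition 2: the semantic characterization of basic-AGM consistency. -/
def GCSCondB {Ω : Type} (C : GCS Ω) : Prop :=
  ∀ E ∈ C.events,
    ((E ∩ C.f Set.univ).Nonempty →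
      (E ∈ C.EC → C.f E = E ∩ C.f Set.univ) ∧
      (E ∈ C.EA → C.f E = C.f Set.univ)) ∧
    (E ∩ C.f Set.univ = ∅ → E ∈ C.EA →
      ∃ E' : Set Ω, E'.Nonempty ∧ E' ⊆ E ∧ C.f E = C.f Set.univ ∪ E')


/-! Both parts reduce to one fact about the theory `{ψ | S ⊆ ||ψ||}` of a set of states `S`:
adding `φ` to the theory of `T` and closing deductively gives the theory of `||φ|| ∩ T`.
Soundness holds because every state of `||φ|| ∩ T` induces a boolean valuation satisfying all
premises; completeness because `||φ|| ∩ T ⊆ ||ψ||` puts `φ → ψ` into the theory of `T`, and `ψ` follows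
from `φ → ψ` and `φ` by modus ponens. -/

namespace PropForm

variable {α : Type}

theorem eval_foldr_imp (v : α → Bool) (l : List (PropForm α)) (ψ : PropForm α) :
    eval v (l.foldr imp ψ) = true ↔ ((∀ χ ∈ l, eval v χ = true) → eval v ψ = true) := by
  induction l with
  | nil => simp
  | cons χ l ih =>
    simp only [List.foldr_cons, imp, eval, Bool.or_eq_true, Bool.not_eq_true', ih,
      List.mem_cons, forall_eq_or_imp]
    cases eval v χ <;> simp

theorem tautology_modus_ponens (φ ψ : PropForm α) : Tautology ([φ.imp ψ, φ].foldr imp ψ) := by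
  intro v
  rw [eval_foldr_imp]
  cases h : eval v φ <;> simp [imp, eval, h]

end PropForm

open PropForm

section Semantics

variable {Ω α : Type} (V : α → Set Ω)

open Classical in
noncomputable def stateValuation (ω : Ω) (a : α) : Bool := decide (ω ∈ V a)

theorem eval_stateValuation (ω : Ω) (χ : PropForm α) :
    eval (stateValuation V ω) χ = true ↔ ω ∈ truthSet V χ := by
  induction χ with
  | atom a => simp [stateValuation, eval, truthSet]
  | neg χ ih => simp [eval, truthSet, ← ih]
  | or χ₁ χ₂ ih₁ ih₂ => simp [eval, truthSet, ih₁, ih₂]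

def theoryOf (S : Set Ω) : Set (PropForm α) := {ψ | S ⊆ truthSet V ψ}

theorem Cn_subset_theoryOf {S : Set Ω} {F : Set (PropForm α)} (hF : F ⊆ theoryOf V S) :
    Cn F ⊆ theoryOf V S := by
  rintro ψ ⟨l, hl, htaut⟩ ω hω
  have hpremises : ∀ χ ∈ l, eval (stateValuation V ω) χ = true := fun χ hχ =>
    (eval_stateValuation V ω χ).mpr (hF (hl χ hχ) hω)
  exact (eval_stateValuation V ω ψ).mp ((eval_foldr_imp _ l ψ).mp (htaut _) hpremises)

theorem Cn_theoryOf_union_singleton (T : Set Ω) (φ : PropForm α) :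
    Cn (theoryOf V T ∪ {φ}) = theoryOf V (truthSet V φ ∩ T) := by
  apply subset_antisymm
  · refine Cn_subset_theoryOf V (Set.union_subset ?_ ?_)
    · exact fun χ hχ => Set.inter_subset_right.trans hχ
    · exact Set.singleton_subset_iff.mpr Set.inter_subset_left
  · intro ψ hψ
    have himp : φ.imp ψ ∈ theoryOf V T := fun ω hωT => by
      by_cases hωφ : ω ∈ truthSet V φ
      · exact Or.inr (hψ ⟨hωφ, hωT⟩)
      · exact Or.inl hωφ
    refine ⟨[φ.imp ψ, φ], ?_, tautology_modus_ponens φ ψ⟩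
    simp only [List.mem_cons, List.not_mem_nil, or_false]
    rintro χ (rfl | rfl)
    · exact Or.inl himp
    · exact Or.inr rfl

end Semantics

theorem gcsB_expansion_and_identity_general {Ω α : Type}
    (C : GCS Ω) (V : α → Set Ω) :
    ∀ φ ∈ gcsPsi C V,
      ((C.f (truthSet V φ) = truthSet V φ ∩ C.f Set.univ ∧
          (truthSet V φ ∩ C.f Set.univ).Nonempty) →
        gcsB C V φ = Cn (gcsK C V ∪ {φ})) ∧
      (C.f (truthSet V φ) = C.f Set.univ → gcsB C V φ = gcsK C V) := by
  intro φ _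
  have hB : gcsB C V φ = theoryOf V (C.f (truthSet V φ)) := rfl
  have hK : gcsK C V = theoryOf V (C.f Set.univ) := rfl
  refine ⟨fun ⟨hf, _⟩ => ?_, fun hf => ?_⟩
  · rw [hB, hK, Cn_theoryOf_union_singleton, hf]
  · rw [hB, hK, hf]

/-- for φ ∈ Ψ, (i) if f(||φ||) = ||φ|| ∩ f(Ω) and this set is nonempty then
B_{K,Ψ}(φ) = [K ∪ {φ}]^PL, and (ii) if f(||φ||) = f(Ω) then B_{K,Ψ}(φ) = K. -/
theorem gcsB_expansion_and_identity {Ω α : Type} [Countable α] [Nonempty α]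
    (C : GCS Ω) (V : α → Set Ω) :
    ∀ φ ∈ gcsPsi C V,
      ((C.f (truthSet V φ) = truthSet V φ ∩ C.f Set.univ ∧
          (truthSet V φ ∩ C.f Set.univ).Nonempty) →
        gcsB C V φ = Cn (gcsK C V ∪ {φ})) ∧
      (C.f (truthSet V φ) = C.f Set.univ → gcsB C V φ = gcsK C V) :=
  gcsB_expansion_and_identity_general C V
end
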